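/- Assume the nozzle geometry and the 2D CGO function, with s·ε ≤ 1, and let [T₁, T₂] ⊆ [0, T] with T₂ − T₁ = ε². Let θ ∈ (0, 1), A, B ≥ 0, (x₀, t₀) ∈ D̄_ε × [T₁, T₂], and let φ : D̄_ε × [T₁, T₂] → ℂ satisfy |φ(x₀, t₀)| ≤ A and |φ(x, t) − φ(x₀, t₀)| ≤ B·(‖x − x₀‖ + |t − t₀|^{1/2})^{θ} for all (x, t). Then there exists a constant C > 0 depending only on μ, λ and T such that |∫_{T₁}^{T₂}∫_{D_ε} φ(x, t)·u₀(x, t) dx dt| ≤ C·( A·ε^{2+l} + B·ε^{2+l+θ l₀} ). -/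

import Mathlib

noncomputable section

/-- Partial derivative in the first spatial variable. -/
def pd1 (f : ℝ → ℝ → ℝ → ℂ) (x₁ x₂ t : ℝ) : ℂ := deriv (fun y => f y x₂ t) x₁

/-- Partial derivative in the second spatial variable. -/
def pd2 (f : ℝ → ℝ → ℝ → ℂ) (x₁ x₂ t : ℝ) : ℂ := deriv (fun y => f x₁ y t) x₂

/-- Partial derivative in time. -/
def pdt (f : ℝ → ℝ → ℝ → ℂ) (x₁ x₂ t : ℝ) : ℂ := deriv (fun τ => f x₁ x₂ τ) t

/-- Spatial Laplacian `Δ = ∂₁² + ∂₂²`. -/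
def lap (f : ℝ → ℝ → ℝ → ℂ) (x₁ x₂ t : ℝ) : ℂ :=
  pd1 (pd1 f) x₁ x₂ t + pd2 (pd2 f) x₁ x₂ t

/-- The 2D complex geometric optics function
`u₀(x,t) = exp(μ^{-1/2}((s d₁ + i√(s²+λ) d₂) x₁ + (s d₂ − i√(s²+λ) d₁) x₂) + λ t)`. -/
def cgo2 (μ lam s d₁ d₂ : ℝ) (x₁ x₂ t : ℝ) : ℂ :=
  Complex.exp (((Real.sqrt μ : ℝ) : ℂ)⁻¹ *
      (((s : ℂ) * (d₁ : ℂ) + Complex.I * ((Real.sqrt (s ^ 2 + lam) : ℝ) : ℂ) * (d₂ : ℂ)) *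
          (x₁ : ℂ) +
        ((s : ℂ) * (d₂ : ℂ) - Complex.I * ((Real.sqrt (s ^ 2 + lam) : ℝ) : ℂ) * (d₁ : ℂ)) *
          (x₂ : ℂ)) +
    (lam : ℂ) * (t : ℂ))

/-- The parabolic distance `ρ = ‖x − y‖ + |t − τ|^{1/2}` in two space dimensions. -/
def prho (x₁ x₂ t y₁ y₂ τ : ℝ) : ℝ :=
  Real.sqrt ((x₁ - y₁) ^ 2 + (x₂ - y₂) ^ 2) + Real.sqrt |t - τ|

/-- Euclidean norm of the spatial gradient of `w`. -/
def gradNorm (w : ℝ → ℝ → ℝ → ℂ) (x₁ x₂ t : ℝ) : ℝ :=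
  Real.sqrt (‖pd1 w x₁ x₂ t‖ ^ 2 + ‖pd2 w x₁ x₂ t‖ ^ 2)

/-- The closed nozzle space–time cylinder
`D̄_ε × [T₁,T₂]`, `D_ε = {0 ≤ x₁ ≤ ε^l, γ(x₁) ≤ x₂ ≤ γ(x₁)+ε}`. -/
def nozzleCyl (ε l T₁ T₂ : ℝ) (γ : ℝ → ℝ) : Set (ℝ × ℝ × ℝ) :=
  {p : ℝ × ℝ × ℝ | p.1 ∈ Set.Icc 0 (ε ^ l) ∧ p.2.1 ∈ Set.Icc (γ p.1) (γ p.1 + ε) ∧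
    p.2.2 ∈ Set.Icc T₁ T₂}

/-- Parabolic `C^{1,α}` bound with constant `C` on the set `S`. -/
structure ParabolicC1 (w : ℝ → ℝ → ℝ → ℂ) (S : Set (ℝ × ℝ × ℝ)) (C α : ℝ) : Prop where
  bdd : ∀ p ∈ S, ‖w p.1 p.2.1 p.2.2‖ ≤ C
  grad_bdd : ∀ p ∈ S, gradNorm w p.1 p.2.1 p.2.2 ≤ C
  time_bdd : ∀ p ∈ S, ‖pdt w p.1 p.2.1 p.2.2‖ ≤ C
  lip : ∀ p ∈ S, ∀ q ∈ S,
    ‖w p.1 p.2.1 p.2.2 - w q.1 q.2.1 q.2.2‖ ≤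
      C * prho p.1 p.2.1 p.2.2 q.1 q.2.1 q.2.2
  grad_holder : ∀ p ∈ S, ∀ q ∈ S,
    Real.sqrt (‖pd1 w p.1 p.2.1 p.2.2 - pd1 w q.1 q.2.1 q.2.2‖ ^ 2 +
        ‖pd2 w p.1 p.2.1 p.2.2 - pd2 w q.1 q.2.1 q.2.2‖ ^ 2) ≤
      C * prho p.1 p.2.1 p.2.2 q.1 q.2.1 q.2.2 ^ α
  taylor : ∀ p ∈ S, ∀ q ∈ S,
    ‖w p.1 p.2.1 p.2.2 - w q.1 q.2.1 q.2.2
        - pd1 w q.1 q.2.1 q.2.2 * ((p.1 - q.1 : ℝ) : ℂ)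
        - pd2 w q.1 q.2.1 q.2.2 * ((p.2.1 - q.2.1 : ℝ) : ℂ)
        - pdt w q.1 q.2.1 q.2.2 * ((p.2.2 - q.2.2 : ℝ) : ℂ)‖ ≤
      C * prho p.1 p.2.1 p.2.2 q.1 q.2.1 q.2.2 ^ (1 + α)

/-- `w` is (jointly) continuously differentiable in `(x,t)` on the set `S`. -/
structure SmoothC1 (w : ℝ → ℝ → ℝ → ℂ) (S : Set (ℝ × ℝ × ℝ)) : Prop where
  cont : ContinuousOn (fun p : ℝ × ℝ × ℝ => w p.1 p.2.1 p.2.2) S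
  jdiff : ∀ p ∈ S, DifferentiableAt ℝ (fun q : ℝ × ℝ × ℝ => w q.1 q.2.1 q.2.2) p
  cont1 : ContinuousOn (fun p : ℝ × ℝ × ℝ => pd1 w p.1 p.2.1 p.2.2) S
  cont2 : ContinuousOn (fun p : ℝ × ℝ × ℝ => pd2 w p.1 p.2.1 p.2.2) S
  contt : ContinuousOn (fun p : ℝ × ℝ × ℝ => pdt w p.1 p.2.1 p.2.2) S


/-! On the cylinder `D̄_ε × [T₁, T₂]` the real part of the exponent of `u₀` is
`μ^{-1/2} s (d₁ x₁ + d₂ x₂) + λ t ≤ μ^{-1/2} + λ T`, because `d₁, d₂ ≤ 0`, `x₁ ≥ 0`, `x₂ ≥ -ε` and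
`s ε ≤ 1`. Every point of the cylinder lies within parabolic distance `ε^l + 4ε ≤ 5 ε^{l₀}` of
`(x₀, t₀)`, so the Hölder condition gives `|φ| ≤ A + 5 B ε^{θ l₀}`. The cylinder has measure
`ε^l · ε · ε² ≤ ε^{2+l}`. -/

open Real Set

theorem norm_cgo2 (μ lam s d₁ d₂ x₁ x₂ t : ℝ) :
    ‖cgo2 μ lam s d₁ d₂ x₁ x₂ t‖ = exp ((√μ)⁻¹ * (s * d₁ * x₁ + s * d₂ * x₂) + lam * t) := by
  rw [cgo2, Complex.norm_exp, ← Complex.ofReal_inv]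
  simp [Complex.mul_re, Complex.mul_im]

theorem norm_cgo2_le {μ lam s d₁ d₂ ε T x₁ x₂ t : ℝ} (hlam : 0 ≤ lam) (hs : 0 ≤ s)
    (hsε : s * ε ≤ 1) (hd₁ : d₁ ≤ 0) (hd₂ : -1 ≤ d₂) (hd₂' : d₂ ≤ 0)
    (hx₁ : 0 ≤ x₁) (hx₂ : -ε ≤ x₂) (ht : t ≤ T) :
    ‖cgo2 μ lam s d₁ d₂ x₁ x₂ t‖ ≤ exp ((√μ)⁻¹ + lam * T) := by
  rw [norm_cgo2]
  gcongr exp ?_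
  have h₁ : s * d₁ * x₁ ≤ 0 :=
    mul_nonpos_of_nonpos_of_nonneg (mul_nonpos_of_nonneg_of_nonpos hs hd₁) hx₁
  have h₂ : s * d₂ * x₂ ≤ 1 := by nlinarith [mul_nonneg hs (neg_nonneg.2 hd₂')]
  have : (√μ)⁻¹ * (s * d₁ * x₁ + s * d₂ * x₂) ≤ (√μ)⁻¹ * 1 := by gcongr; linarith
  have : lam * t ≤ lam * T := by gcongr
  linarith

theorem sqrt_sq_add_sq_le_abs_add_abs (a b : ℝ) : √(a ^ 2 + b ^ 2) ≤ |a| + |b| := by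
  rw [sqrt_le_left (by positivity), add_sq, sq_abs, sq_abs]
  nlinarith [abs_nonneg a, abs_nonneg b]

section Nozzle

variable {ε l T₁ T₂ : ℝ} {γ : ℝ → ℝ}

theorem prho_le_of_mem_nozzleCyl {p q : ℝ × ℝ × ℝ} (hε0 : 0 < ε) (hε1 : ε ≤ 1)
    (hγ : ∀ x ∈ Icc (0:ℝ) (ε ^ l), |γ x| ≤ ε) (hT : T₂ - T₁ ≤ ε ^ 2)
    (hp : p ∈ nozzleCyl ε l T₁ T₂ γ) (hq : q ∈ nozzleCyl ε l T₁ T₂ γ) :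
    prho p.1 p.2.1 p.2.2 q.1 q.2.1 q.2.2 ≤ 5 * ε ^ min l 1 := by
  obtain ⟨hp₁, hp₂, hpt⟩ := hp
  obtain ⟨hq₁, hq₂, hqt⟩ := hq
  have h₁ : |p.1 - q.1| ≤ ε ^ l - 0 := abs_sub_le_of_le_of_le hp₁.1 hp₁.2 hq₁.1 hq₁.2
  have h₂ : |p.2.1 - q.2.1| ≤ 3 * ε := by
    have := abs_le.1 (hγ _ hp₁); have := abs_le.1 (hγ _ hq₁)
    rw [abs_le]; constructor <;> linarith [hp₂.1, hp₂.2, hq₂.1, hq₂.2]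
  have ht : √|p.2.2 - q.2.2| ≤ ε := by
    rw [sqrt_le_left hε0.le]
    exact (abs_sub_le_of_le_of_le hpt.1 hpt.2 hqt.1 hqt.2).trans hT
  have hl : ε ^ l ≤ ε ^ min l 1 := rpow_le_rpow_of_exponent_ge hε0 hε1 (min_le_left l 1)
  have hε : ε ≤ ε ^ min l 1 := by
    simpa using rpow_le_rpow_of_exponent_ge hε0 hε1 (min_le_right l 1)
  calc prho p.1 p.2.1 p.2.2 q.1 q.2.1 q.2.2
      ≤ |p.1 - q.1| + |p.2.1 - q.2.1| + √|p.2.2 - q.2.2| :=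
        add_le_add_left (sqrt_sq_add_sq_le_abs_add_abs _ _) _
    _ ≤ 5 * ε ^ min l 1 := by linarith

theorem norm_le_of_holder_on_nozzleCyl {E : Type*} [SeminormedAddGroup E]
    {φ : ℝ → ℝ → ℝ → E} {q : ℝ × ℝ × ℝ} {θ A B : ℝ} (hε0 : 0 < ε) (hε1 : ε ≤ 1)
    (hγ : ∀ x ∈ Icc (0:ℝ) (ε ^ l), |γ x| ≤ ε) (hT : T₂ - T₁ ≤ ε ^ 2)
    (hθ0 : 0 ≤ θ) (hθ1 : θ ≤ 1) (hB : 0 ≤ B)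
    (hq : q ∈ nozzleCyl ε l T₁ T₂ γ) (hφq : ‖φ q.1 q.2.1 q.2.2‖ ≤ A)
    (hφ : ∀ p ∈ nozzleCyl ε l T₁ T₂ γ, ‖φ p.1 p.2.1 p.2.2 - φ q.1 q.2.1 q.2.2‖
      ≤ B * prho p.1 p.2.1 p.2.2 q.1 q.2.1 q.2.2 ^ θ)
    {p : ℝ × ℝ × ℝ} (hp : p ∈ nozzleCyl ε l T₁ T₂ γ) :
    ‖φ p.1 p.2.1 p.2.2‖ ≤ A + 5 * B * ε ^ (θ * min l 1) := calc
  ‖φ p.1 p.2.1 p.2.2‖ ≤ ‖φ q.1 q.2.1 q.2.2‖ + ‖φ p.1 p.2.1 p.2.2 - φ q.1 q.2.1 q.2.2‖ :=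
      norm_le_norm_add_norm_sub' _ _
  _ ≤ A + B * (5 * ε ^ min l 1) ^ θ := by
      gcongr
      exact (hφ p hp).trans (by gcongr; exacts [by unfold prho; positivity,
        prho_le_of_mem_nozzleCyl hε0 hε1 hγ hT hp hq])
  _ ≤ A + 5 * B * ε ^ (θ * min l 1) := by
      rw [mul_comm θ, rpow_mul hε0.le, mul_rpow (by norm_num) (by positivity), mul_comm 5 B,
        mul_assoc]
      gcongr
      exact rpow_le_self_of_one_le (by norm_num) hθ1

end Nozzle

theorem norm_intervalIntegral_le_of_forall_Icc {E : Type*} [NormedAddCommGroup E]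
    [NormedSpace ℝ E] {f : ℝ → E} {a b K : ℝ} (hab : a ≤ b) (hf : ∀ x ∈ Icc a b, ‖f x‖ ≤ K) :
    ‖∫ x in a..b, f x‖ ≤ K * (b - a) := by
  simpa [abs_of_nonneg (sub_nonneg.2 hab)] using
    intervalIntegral.norm_integral_le_of_norm_le_const fun x hx ↦
      hf x (Ioc_subset_Icc_self (uIoc_of_le hab ▸ hx))

theorem norm_integral_nozzle_le {E : Type*} [NormedAddCommGroup E] [NormedSpace ℝ E]
    {F : ℝ → ℝ → ℝ → E} {a b w T₁ T₂ K : ℝ} (g : ℝ → ℝ) (hab : a ≤ b) (hw : 0 ≤ w)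
    (hT : T₁ ≤ T₂)
    (hF : ∀ t ∈ Icc T₁ T₂, ∀ x₁ ∈ Icc a b, ∀ x₂ ∈ Icc (g x₁) (g x₁ + w), ‖F x₁ x₂ t‖ ≤ K) :
    ‖∫ t in T₁..T₂, ∫ x₁ in a..b, ∫ x₂ in (g x₁)..(g x₁ + w), F x₁ x₂ t‖
      ≤ K * w * (b - a) * (T₂ - T₁) :=
  norm_intervalIntegral_le_of_forall_Icc hT fun t ht ↦
    norm_intervalIntegral_le_of_forall_Icc hab fun x₁ hx₁ ↦ by
      simpa using norm_intervalIntegral_le_of_forall_Icc (by linarith) (hF t ht x₁ hx₁)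

theorem volume_term_estimate_I3_general
    (μ lam T : ℝ) (hlam : 0 < lam) :
    ∃ C > 0, ∀ (ε l s d₁ d₂ T₁ T₂ θ A B x₀₁ x₀₂ t₀ : ℝ) (γ : ℝ → ℝ) (φ : ℝ → ℝ → ℝ → ℂ),
      ε ∈ Set.Ioo (0:ℝ) 1 → 0 < l →
      ContDiffOn ℝ 2 γ (Set.Icc 0 (ε ^ l)) → γ 0 = 0 →
      derivWithin γ (Set.Icc 0 (ε ^ l)) 0 = 0 →
      (∀ x ∈ Set.Icc (0:ℝ) (ε ^ l), |γ x| ≤ ε) →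
      d₁ < 0 → d₂ < 0 → d₁ ^ 2 + d₂ ^ 2 = 1 →
      0 < s → s * ε ≤ 1 →
      0 ≤ T₁ → T₂ ≤ T → T₂ - T₁ = ε ^ 2 →
      θ ∈ Set.Ioo (0:ℝ) 1 → 0 ≤ A → 0 ≤ B →
      (x₀₁, x₀₂, t₀) ∈ nozzleCyl ε l T₁ T₂ γ →
      ‖φ x₀₁ x₀₂ t₀‖ ≤ A →
      (∀ p ∈ nozzleCyl ε l T₁ T₂ γ,
        ‖φ p.1 p.2.1 p.2.2 - φ x₀₁ x₀₂ t₀‖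
          ≤ B * (Real.sqrt ((p.1 - x₀₁) ^ 2 + (p.2.1 - x₀₂) ^ 2)
              + Real.sqrt |p.2.2 - t₀|) ^ θ) →
      ‖∫ t in T₁..T₂, ∫ x₁ in (0:ℝ)..(ε ^ l), ∫ x₂ in (γ x₁)..(γ x₁ + ε),
            (φ x₁ x₂ t * cgo2 μ lam s d₁ d₂ x₁ x₂ t)‖
        ≤ C * (A * ε ^ (2 + l) + B * ε ^ (2 + l + θ * min l 1)) := by
  refine ⟨5 * exp ((√μ)⁻¹ + lam * T), by positivity, ?_⟩
  intro ε l s d₁ d₂ T₁ T₂ θ A B x₀₁ x₀₂ t₀ γ φ ⟨hε0, hε1⟩ _ _ _ _ hγ hd₁ hd₂ hd hs hsε _ hT₂ hTT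
    ⟨hθ0, hθ1⟩ hA hB hx₀ hφ₀ hφ
  set M := exp ((√μ)⁻¹ + lam * T)
  set K := A + 5 * B * ε ^ (θ * min l 1)
  have hφ_le : ∀ p ∈ nozzleCyl ε l T₁ T₂ γ, ‖φ p.1 p.2.1 p.2.2‖ ≤ K := fun p ↦
    norm_le_of_holder_on_nozzleCyl hε0 hε1.le hγ hTT.le hθ0.le hθ1.le hB hx₀ hφ₀ hφ
  have hu : ∀ p ∈ nozzleCyl ε l T₁ T₂ γ, ‖cgo2 μ lam s d₁ d₂ p.1 p.2.1 p.2.2‖ ≤ M :=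
    fun p ⟨hx₁, hx₂, ht⟩ ↦ norm_cgo2_le hlam.le hs.le hsε hd₁.le (by nlinarith) hd₂.le hx₁.1
      (by linarith [(abs_le.1 (hγ _ hx₁)).1, hx₂.1]) (ht.2.trans hT₂)
  calc _ ≤ K * M * ε * (ε ^ l - 0) * (T₂ - T₁) :=
        norm_integral_nozzle_le (F := fun x₁ x₂ t ↦ φ x₁ x₂ t * cgo2 μ lam s d₁ d₂ x₁ x₂ t) γ
          (by positivity) hε0.le (by linarith [sq_nonneg ε]) fun t ht x₁ hx₁ x₂ hx₂ ↦ by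
            have hp : (x₁, x₂, t) ∈ nozzleCyl ε l T₁ T₂ γ := ⟨hx₁, hx₂, ht⟩
            rw [norm_mul]
            exact mul_le_mul (hφ_le (x₁, x₂, t) hp) (hu (x₁, x₂, t) hp) (norm_nonneg _)
              (by positivity)
    _ ≤ K * M * 1 * ε ^ l * ε ^ 2 := by
        rw [hTT, sub_zero]
        gcongr
    _ = M * (A * ε ^ (2 + l) + 5 * B * ε ^ (2 + l + θ * min l 1)) := by
        rw [rpow_add hε0 (2 + l), rpow_add hε0 2, rpow_two]; ring
    _ ≤ 5 * M * (A * ε ^ (2 + l) + B * ε ^ (2 + l + θ * min l 1)) := by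
        have : 0 ≤ A * ε ^ (2 + l) := by positivity
        nlinarith [exp_pos ((√μ)⁻¹ + lam * T)]

/-- **Volume-term estimate (Lemma 3.6).**
If `|φ(x₀,t₀)| ≤ A` and `φ` is `θ`-Hölder (constant `B`) with respect to the parabolic
distance to the base point `(x₀, t₀) ∈ D̄_ε × [T₁,T₂]`, then
`|∫_{T₁}^{T₂} ∫_{D_ε} φ u₀| ≤ C (A ε^{2+l} + B ε^{2+l+θl₀})`,
with `C` depending only on `μ, λ, T`. -/
theorem volume_term_estimate_I3
    (μ lam T : ℝ) (hμ : 0 < μ) (hlam : 0 < lam) (hT : 0 < T) :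
    ∃ C > 0, ∀ (ε l s d₁ d₂ T₁ T₂ θ A B x₀₁ x₀₂ t₀ : ℝ) (γ : ℝ → ℝ) (φ : ℝ → ℝ → ℝ → ℂ),
      ε ∈ Set.Ioo (0:ℝ) 1 → 0 < l →
      ContDiffOn ℝ 2 γ (Set.Icc 0 (ε ^ l)) → γ 0 = 0 →
      derivWithin γ (Set.Icc 0 (ε ^ l)) 0 = 0 →
      (∀ x ∈ Set.Icc (0:ℝ) (ε ^ l), |γ x| ≤ ε) →
      d₁ < 0 → d₂ < 0 → d₁ ^ 2 + d₂ ^ 2 = 1 →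
      0 < s → s * ε ≤ 1 →
      0 ≤ T₁ → T₂ ≤ T → T₂ - T₁ = ε ^ 2 →
      θ ∈ Set.Ioo (0:ℝ) 1 → 0 ≤ A → 0 ≤ B →
      (x₀₁, x₀₂, t₀) ∈ nozzleCyl ε l T₁ T₂ γ →
      ‖φ x₀₁ x₀₂ t₀‖ ≤ A →
      (∀ p ∈ nozzleCyl ε l T₁ T₂ γ,
        ‖φ p.1 p.2.1 p.2.2 - φ x₀₁ x₀₂ t₀‖
          ≤ B * (Real.sqrt ((p.1 - x₀₁) ^ 2 + (p.2.1 - x₀₂) ^ 2)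
              + Real.sqrt |p.2.2 - t₀|) ^ θ) →
      ‖∫ t in T₁..T₂, ∫ x₁ in (0:ℝ)..(ε ^ l), ∫ x₂ in (γ x₁)..(γ x₁ + ε),
            (φ x₁ x₂ t * cgo2 μ lam s d₁ d₂ x₁ x₂ t)‖
        ≤ C * (A * ε ^ (2 + l) + B * ε ^ (2 + l + θ * min l 1)) :=
  volume_term_estimate_I3_general μ lam T hlam
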